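/- Let ρ be a probability density on ℝⁿ invariant under a group G acting via a representation into GL(n, ℝ), and let v be a time-dependent, globally Lipschitz vector field that is equivariant under a subgroup H ≤ G. Then for every T ≥ 0, the push-forward of ρ along the time-T flow map F_{v,T} is H-invariant. -/

import Mathlib

/-!
The matrix `R h` maps trajectories of `v` to trajectories, so by uniqueness of solutions of a
Lipschitz ODE the flow map commutes with `R h`, and then so does its inverse. By the chain rule
the Jacobian of `Finv` at `R h x` is the Jacobian at `x` conjugated by `R h`, so the two
determinants agree, and the invariance of `ρ` does the rest.
-/

theorem ContinuousLinearMap.map_trajectory_of_equivariant {E : Type*} [NormedAddCommGroup E]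
    [NormedSpace ℝ E] {v : E → ℝ → E} {K : NNReal} (hlip : ∀ t, LipschitzWith K (v · t))
    (L : E →L[ℝ] E) (hequiv : ∀ x t, v (L x) t = L (v x t)) {traj : E → ℝ → E}
    (htraj0 : ∀ z, traj z 0 = z)
    (htraj : ∀ z, ∀ t : ℝ, 0 ≤ t → HasDerivAt (traj z) (v (traj z t) t) t)
    (z : E) {T : ℝ} (hT : 0 ≤ T) :
    traj (L z) T = L (traj z T) := by
  have hL : ∀ t, 0 ≤ t → HasDerivAt (L ∘ traj z) (v (L (traj z t)) t) t := fun t ht => by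
    rw [hequiv]
    exact L.hasFDerivAt.comp_hasDerivAt t (htraj z t ht)
  refine ODE_solution_unique (v := fun t x => v x t) hlip
    (fun t ht => (htraj _ t ht.1).continuousAt.continuousWithinAt)
    (fun t ht => (htraj _ t ht.1).hasDerivWithinAt)
    (fun t ht => (hL t ht.1).continuousAt.continuousWithinAt)
    (fun t ht => (hL t ht.1).hasDerivWithinAt)
    (by simp [htraj0]) (Set.right_mem_Icc.2 hT)

theorem ContinuousLinearEquiv.det_fderiv_apply_of_commute {𝕜 E : Type*}
    [NontriviallyNormedField 𝕜] [NormedAddCommGroup E] [NormedSpace 𝕜 E] {f : E → E}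
    (e : E ≃L[𝕜] E) (hf : Function.Commute f e) (x : E) :
    (fderiv 𝕜 f (e x)).det = (fderiv 𝕜 f x).det := by
  have hconj : (fderiv 𝕜 f (e x)).comp (e : E →L[𝕜] E) =
      (e : E →L[𝕜] E).comp (fderiv 𝕜 f x) := by
    rw [← e.comp_right_fderiv, ← e.comp_fderiv, hf.comp_eq]
  have hfderiv : fderiv 𝕜 f (e x) =
      ((e : E →L[𝕜] E).comp (fderiv 𝕜 f x)).comp (e.symm : E →L[𝕜] E) := by
    rw [← hconj]; ext; simp
  rw [hfderiv]
  exact LinearMap.det_conj _ e.toLinearEquiv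

noncomputable def Matrix.GeneralLinearGroup.toContinuousLinearEquiv {n : Type*} [Fintype n]
    [DecidableEq n] (A : Matrix.GeneralLinearGroup n ℝ) : (n → ℝ) ≃L[ℝ] (n → ℝ) :=
  (LinearMap.GeneralLinearGroup.generalLinearEquiv ℝ (n → ℝ)
    (Matrix.GeneralLinearGroup.toLin A)).toContinuousLinearEquiv

theorem pushforward_flow_invariant_general {n : ℕ} {G : Type*} [Group G]
    (R : G →* Matrix.GeneralLinearGroup (Fin n) ℝ)
    (H : Subgroup G)
    (ρ : (Fin n → ℝ) → ℝ)
    (hρinv : ∀ (g : G) (x : Fin n → ℝ), ρ ((R g : Matrix (Fin n) (Fin n) ℝ).mulVec x) = ρ x)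
    (v : (Fin n → ℝ) → ℝ → (Fin n → ℝ))
    (K : NNReal)
    (hlip : ∀ t : ℝ, LipschitzWith K (fun x => v x t))
    (hequiv : ∀ h ∈ H, ∀ (x : Fin n → ℝ) (t : ℝ),
      v ((R h : Matrix (Fin n) (Fin n) ℝ).mulVec x) t
        = (R h : Matrix (Fin n) (Fin n) ℝ).mulVec (v x t))
    (T : ℝ) (hT : 0 ≤ T)
    -- `F` is the time-`T` flow map of `v`, with inverse `Finv`:
    (F Finv : (Fin n → ℝ) → (Fin n → ℝ))
    (traj : (Fin n → ℝ) → ℝ → (Fin n → ℝ))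
    (htraj0 : ∀ z, traj z 0 = z)
    (htraj : ∀ z, ∀ t : ℝ, 0 ≤ t → HasDerivAt (traj z) (v (traj z t) t) t)
    (hF : ∀ z, F z = traj z T)
    (hleft : Function.LeftInverse Finv F) (hright : Function.RightInverse Finv F) :
    ∀ h ∈ H, ∀ x : Fin n → ℝ,
      ρ (Finv ((R h : Matrix (Fin n) (Fin n) ℝ).mulVec x))
          * |(fderiv ℝ Finv ((R h : Matrix (Fin n) (Fin n) ℝ).mulVec x)).det|
        = ρ (Finv x) * |(fderiv ℝ Finv x).det| := by
  intro h hh x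
  set e := (R h).toContinuousLinearEquiv
  have hF_comm : Function.Commute F e := fun z => by
    rw [hF, hF]
    exact (e : (Fin n → ℝ) →L[ℝ] (Fin n → ℝ)).map_trajectory_of_equivariant hlip
      (hequiv h hh) htraj0 htraj z hT
  have hFinv_comm : Function.Commute Finv e := hF_comm.inverse_left hleft hright
  change ρ (Finv (e x)) * |(fderiv ℝ Finv (e x)).det| = _
  rw [hFinv_comm x, e.det_fderiv_apply_of_commute hFinv_comm]
  exact congrArg (· * _) (hρinv h (Finv x))

/-- The pushforward of a `G`-invariant density along the time-`T` flow map of an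
`H`-equivariant, globally Lipschitz time-dependent vector field is `H`-invariant. -/
theorem pushforward_flow_invariant {n : ℕ} {G : Type*} [Group G]
    (R : G →* Matrix.GeneralLinearGroup (Fin n) ℝ)
    (H : Subgroup G)
    (ρ : (Fin n → ℝ) → ℝ)
    (hmeas : Measurable ρ) (hnonneg : ∀ x, 0 ≤ ρ x)
    (hint : ∫ x, ρ x = 1)
    (hρinv : ∀ (g : G) (x : Fin n → ℝ), ρ ((R g : Matrix (Fin n) (Fin n) ℝ).mulVec x) = ρ x)
    (v : (Fin n → ℝ) → ℝ → (Fin n → ℝ))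
    (K : NNReal)
    (hlip : ∀ t : ℝ, LipschitzWith K (fun x => v x t))
    (hcont : Continuous fun p : (Fin n → ℝ) × ℝ => v p.1 p.2)
    (hequiv : ∀ h ∈ H, ∀ (x : Fin n → ℝ) (t : ℝ),
      v ((R h : Matrix (Fin n) (Fin n) ℝ).mulVec x) t
        = (R h : Matrix (Fin n) (Fin n) ℝ).mulVec (v x t))
    (T : ℝ) (hT : 0 ≤ T)
    -- `F` is the time-`T` flow map of `v`, with inverse `Finv`:
    (F Finv : (Fin n → ℝ) → (Fin n → ℝ))
    (traj : (Fin n → ℝ) → ℝ → (Fin n → ℝ))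
    (htraj0 : ∀ z, traj z 0 = z)
    (htraj : ∀ z, ∀ t : ℝ, 0 ≤ t → HasDerivAt (traj z) (v (traj z t) t) t)
    (hF : ∀ z, F z = traj z T)
    (hFdiff : ContDiff ℝ 1 F) (hFinvdiff : ContDiff ℝ 1 Finv)
    (hleft : Function.LeftInverse Finv F) (hright : Function.RightInverse Finv F) :
    ∀ h ∈ H, ∀ x : Fin n → ℝ,
      ρ (Finv ((R h : Matrix (Fin n) (Fin n) ℝ).mulVec x))
          * |(fderiv ℝ Finv ((R h : Matrix (Fin n) (Fin n) ℝ).mulVec x)).det|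
        = ρ (Finv x) * |(fderiv ℝ Finv x).det| :=
  pushforward_flow_invariant_general R H ρ hρinv v K hlip hequiv T hT F Finv traj htraj0 htraj hF
    hleft hright
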